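/- Each greedy DEIM step preserves invertibility: if P_{ℓ-1}^T V_{ℓ-1} is invertible and the residual r = u^ℓ − V_{ℓ-1} c (with c solving P_{ℓ-1}^T u^ℓ = (P_{ℓ-1}^T V_{ℓ-1}) c) is nonzero, then choosing p_ℓ = argmax_i |r_i| and appending e_{p_ℓ} to P and u^ℓ to V yields an invertible matrix P_ℓ^T V_ℓ. -/

import Mathlib

open Matrix

/-- Each DEIM greedy step preserves invertibility of `PᵀV`. -/
theorem deim_greedy_step_invertible
    (N m : ℕ) (Vm : Matrix (Fin N) (Fin m) ℝ) (u : Fin N → ℝ)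
    (p' : Fin m → Fin N)
    (hA : IsUnit (Matrix.of (fun i j => Vm (p' i) j) : Matrix (Fin m) (Fin m) ℝ))
    (c : Fin m → ℝ)
    (hc : (Matrix.of (fun i j => Vm (p' i) j) : Matrix (Fin m) (Fin m) ℝ).mulVec c
            = fun i => u (p' i))
    (r : Fin N → ℝ) (hr : r = u - Vm.mulVec c) (hr0 : r ≠ 0)
    (pℓ : Fin N) (hmax : ∀ i, |r i| ≤ |r pℓ|) :
    IsUnit (Matrix.fromBlocks
      (Matrix.of (fun i j => Vm (p' i) j) : Matrix (Fin m) (Fin m) ℝ)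
      (Matrix.of (fun i (_ : Fin 1) => u (p' i)))
      (Matrix.of (fun (_ : Fin 1) j => Vm pℓ j))
      (Matrix.of (fun (_ : Fin 1) (_ : Fin 1) => u pℓ))) := by
  set A : Matrix (Fin m) (Fin m) ℝ := Matrix.of (fun i j => Vm (p' i) j) with hAdef
  set B : Matrix (Fin m) (Fin 1) ℝ := Matrix.of (fun i (_ : Fin 1) => u (p' i))
  set C : Matrix (Fin 1) (Fin m) ℝ := Matrix.of (fun (_ : Fin 1) j => Vm pℓ j)
  set D : Matrix (Fin 1) (Fin 1) ℝ := Matrix.of (fun (_ : Fin 1) (_ : Fin 1) => u pℓ)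
  have hrp : r pℓ ≠ 0 := by
    obtain ⟨i, hi⟩ := Function.ne_iff.mp hr0
    intro h
    have := hmax i
    rw [h, abs_zero] at this
    exact hi (abs_nonpos_iff.mp this)
  haveI : Invertible A := hA.invertible
  rw [Matrix.isUnit_iff_isUnit_det, Matrix.det_fromBlocks₁₁]
  have hDCB : D - C * ⅟A * B = Matrix.of (fun (_ : Fin 1) (_ : Fin 1) => r pℓ) := by
    have hcB : (⅟A) * B = Matrix.of (fun i (_ : Fin 1) => c i) := by
      have : A * Matrix.of (fun i (_ : Fin 1) => c i) = B := by
        ext i k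
        have := congrFun hc i
        simpa [Matrix.mul_apply, Matrix.mulVec, dotProduct, B] using this
      rw [← this, ← Matrix.mul_assoc, invOf_mul_self, Matrix.one_mul]
    ext i k
    have hri := congrFun hr pℓ
    rw [Matrix.mul_assoc, hcB]
    simp [Matrix.mul_apply, Matrix.mulVec, dotProduct, D, C, hri,
      Matrix.sub_apply, Pi.sub_apply]
  rw [hDCB]
  have : (Matrix.of (fun (_ : Fin 1) (_ : Fin 1) => r pℓ)).det = r pℓ := by
    simp [Matrix.det_fin_one]
  rw [this]
  exact ((Matrix.isUnit_iff_isUnit_det A).mp hA).mul (isUnit_iff_ne_zero.mpr hrp)
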